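/- arXiv:2412.02486 — 2 statements merged into one kernel-verified Lean document; each statement's English description precedes it below -/
import Mathlib

section
/- Let (T,g) and (E,h) be finite-dimensional real inner product spaces, G : T* → T the musical isomorphism for g, and f : T → E a surjective linear map. Then the map f ∘ G ∘ f* : E* → E is invertible, and for every v ∈ E one has ((f G f*)⁻¹(v))(v) ≥ ‖f‖⁻² ‖v‖², where ‖f‖ is the operator norm of f. -/
open scoped RealInnerProductSpace

/-- For finite-dimensional real inner product spaces `(T,g)`, `(E,h)`,
`G : T* → T` the musical isomorphism of `g`, and `f : T → E` a surjective linear map,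
the map `f ∘ G ∘ f* : E* → E` is invertible, and for every `v ∈ E`, writing
`v = (f ∘ G ∘ f*) β`, one has `β v ≥ ‖f‖⁻² ‖v‖²` (with `‖f‖` the operator norm). -/
theorem stmt1 {T E : Type*}
    [NormedAddCommGroup T] [InnerProductSpace ℝ T] [FiniteDimensional ℝ T]
    [NormedAddCommGroup E] [InnerProductSpace ℝ E] [FiniteDimensional ℝ E]
    (G : StrongDual ℝ T →L[ℝ] T)
    (hG : ∀ (α : StrongDual ℝ T) (w : T), ⟪G α, w⟫ = α w)
    (f : T →L[ℝ] E) (hf : Function.Surjective f) :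
    Function.Bijective (fun β : StrongDual ℝ E => f (G (β.comp f))) ∧
      ∀ (v : E) (β : StrongDual ℝ E), f (G (β.comp f)) = v →
        (‖f‖ ^ 2)⁻¹ * ‖v‖ ^ 2 ≤ β v := by
  -- key: β (f (G (β.comp f))) = ‖G (β.comp f)‖²
  have key : ∀ β : StrongDual ℝ E,
      β (f (G (β.comp f))) = ‖G (β.comp f)‖ ^ 2 := by
    intro β
    have := hG (β.comp f) (G (β.comp f))
    rw [real_inner_self_eq_norm_sq] at this
    simpa using this.symm
  set A : StrongDual ℝ E →ₗ[ℝ] E :=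
    { toFun := fun β => f (G (β.comp f))
      map_add' := by intro β γ; simp [ContinuousLinearMap.add_comp]
      map_smul' := by intro c β; simp [ContinuousLinearMap.smul_comp] } with hA
  have hinj : Function.Injective A := by
    rw [← LinearMap.ker_eq_bot]
    apply LinearMap.ker_eq_bot'.mpr
    intro β hβ
    have hβ' : f (G (β.comp f)) = 0 := hβ
    have h0 : ‖G (β.comp f)‖ ^ 2 = 0 := by
      rw [← key β, hβ', map_zero]
    have hG0 : G (β.comp f) = 0 := by
      have := pow_eq_zero_iff (n := 2) (by norm_num) |>.mp h0
      exact norm_eq_zero.mp this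
    ext v
    obtain ⟨w, rfl⟩ := hf v
    have := hG (β.comp f) w
    rw [hG0] at this
    simpa using this.symm
  have hbij : Function.Bijective A := by
    refine ⟨hinj, ?_⟩
    have hdim : Module.finrank ℝ (StrongDual ℝ E) = Module.finrank ℝ E :=
      ((InnerProductSpace.toDual ℝ E).toLinearEquiv.finrank_eq).symm
    exact (LinearMap.injective_iff_surjective_of_finrank_eq_finrank hdim).mp hinj
  refine ⟨hbij, ?_⟩
  intro v β hv
  have hβv : β v = ‖G (β.comp f)‖ ^ 2 := by rw [← hv]; exact key β
  have hnv : ‖v‖ ≤ ‖f‖ * ‖G (β.comp f)‖ := by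
    rw [← hv]; exact f.le_opNorm _
  have h2 : ‖v‖ ^ 2 ≤ ‖f‖ ^ 2 * β v := by
    rw [hβv, ← mul_pow]
    exact pow_le_pow_left₀ (norm_nonneg _) hnv 2
  rcases eq_or_lt_of_le (norm_nonneg f) with h0 | hpos
  · have hf0 : f = 0 := by simpa using norm_eq_zero.mp h0.symm
    have : v = 0 := by rw [← hv, hf0]; simp
    simp [this]
  · rw [inv_mul_le_iff₀ (by positivity)]
    linarith [h2]
end

section
/- Let n ≥ 2 and 1 ≤ r ≤ n−1 be integers with 2(n−r−1) < r (i.e. 3r > 2n−2). Let S₁ be the set of symmetric ℂ-bilinear maps T : ℂ^{n-r} × ℂ^{n-r} → ℂ^r for which there exist nonzero x,y ∈ ℂ^{n-r} with T(x,y) = 0. Then S₁ is contained in a proper complex algebraic subset of the space Sym_ℂ(n−r, r) of all such symmetric bilinear maps; equivalently, a generic T ∈ Sym_ℂ(n−r, r) satisfies T(x,y) ≠ 0 for all nonzero x,y. -/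
open MvPolynomial

/-- The coordinates of a bilinear map `T : ℂ^m × ℂ^m → ℂ^r` with respect to the standard
bases: the coordinate indexed by `(i, a, b)` is the `i`-th component of `T e_a e_b`. -/
noncomputable def bilinCoords (m r : ℕ)
    (T : (Fin m → ℂ) →ₗ[ℂ] (Fin m → ℂ) →ₗ[ℂ] (Fin r → ℂ)) :
    Fin r × Fin m × Fin m → ℂ :=
  fun q => T (Pi.single q.2.1 1) (Pi.single q.2.2 1) q.1

noncomputable section StmtAux

def Fpoly (m r : ℕ) (t : Fin r × Fin m × Fin m → ℂ) (c : Fin r) :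
    MvPolynomial (Fin m ⊕ Fin m) ℂ :=
  ∑ a : Fin m, ∑ b : Fin m, C (t (c, a, b)) * X (Sum.inl a) * X (Sum.inr b)

lemma eval_Fpoly {m r : ℕ} (T : (Fin m → ℂ) →ₗ[ℂ] (Fin m → ℂ) →ₗ[ℂ] (Fin r → ℂ))
    (x y : Fin m → ℂ) (c : Fin r) :
    eval (Sum.elim x y) (Fpoly m r (bilinCoords m r T) c) = T x y c := by
  have hx : (∑ a, Pi.single a (x a) : Fin m → ℂ) = x := Finset.univ_sum_single x
  have hy : (∑ b, Pi.single b (y b) : Fin m → ℂ) = y := Finset.univ_sum_single y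
  have single_eq : ∀ (v : Fin m → ℂ) (a : Fin m), (Pi.single a (v a) : Fin m → ℂ) = v a • (Pi.single a (1:ℂ) : Fin m → ℂ) := by
    intro v a; rw [← Pi.single_smul, smul_eq_mul, mul_one]
  conv_rhs => rw [← hx, ← hy]
  rw [map_sum]
  simp only [LinearMap.coe_sum, Finset.sum_apply, map_sum, Finset.sum_apply]
  simp only [single_eq, map_smul, LinearMap.smul_apply, Pi.smul_apply, smul_eq_mul]
  simp only [Fpoly, map_sum, map_mul, eval_C, eval_X, Sum.elim_inl, Sum.elim_inr, bilinCoords]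
  rw [Finset.sum_comm]
  apply Finset.sum_congr rfl; intro a _
  apply Finset.sum_congr rfl; intro b _
  ring

def Tstar (m r : ℕ) : (Fin m → ℂ) →ₗ[ℂ] (Fin m → ℂ) →ₗ[ℂ] (Fin r → ℂ) :=
  LinearMap.mk₂ ℂ
    (fun x y c => ∑ a : Fin m, ∑ b : Fin m,
      if (a:ℕ)+(b:ℕ) = (c:ℕ) then x a * y b else 0)
    (by
      intro x x' y; funext c
      simp only [Pi.add_apply, ← Finset.sum_add_distrib]
      apply Finset.sum_congr rfl; intro a _
      apply Finset.sum_congr rfl; intro b _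
      split_ifs <;> ring)
    (by
      intro s x y; funext c
      simp only [Pi.smul_apply, smul_eq_mul, Finset.mul_sum]
      apply Finset.sum_congr rfl; intro a _
      apply Finset.sum_congr rfl; intro b _
      split_ifs <;> ring)
    (by
      intro x y y'; funext c
      simp only [Pi.add_apply, ← Finset.sum_add_distrib]
      apply Finset.sum_congr rfl; intro a _
      apply Finset.sum_congr rfl; intro b _
      split_ifs <;> ring)
    (by
      intro s x y; funext c
      simp only [Pi.smul_apply, smul_eq_mul, Finset.mul_sum]
      apply Finset.sum_congr rfl; intro a _
      apply Finset.sum_congr rfl; intro b _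
      split_ifs <;> ring)

lemma Tstar_symm (m r : ℕ) (x y : Fin m → ℂ) : Tstar m r x y = Tstar m r y x := by
  funext c
  show (∑ a : Fin m, ∑ b : Fin m, if (a:ℕ)+(b:ℕ) = (c:ℕ) then x a * y b else 0)
      = ∑ a : Fin m, ∑ b : Fin m, if (a:ℕ)+(b:ℕ) = (c:ℕ) then y a * x b else 0
  rw [Finset.sum_comm]
  apply Finset.sum_congr rfl; intro a _
  apply Finset.sum_congr rfl; intro b _
  have : (b:ℕ)+(a:ℕ) = (c:ℕ) ↔ (a:ℕ)+(b:ℕ) = (c:ℕ) := by omega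
  rw [if_congr this rfl rfl]
  split_ifs <;> ring

lemma coords_Tstar (m r : ℕ) (c : Fin r) (a b : Fin m) :
    bilinCoords m r (Tstar m r) (c, a, b) = if (a:ℕ)+(b:ℕ) = (c:ℕ) then 1 else 0 := by
  show (∑ a' : Fin m, ∑ b' : Fin m,
      if (a':ℕ)+(b':ℕ) = (c:ℕ) then (Pi.single a (1:ℂ) : Fin m → ℂ) a' * (Pi.single b (1:ℂ) : Fin m → ℂ) b' else 0) = _
  rw [Finset.sum_eq_single a]
  · rw [Finset.sum_eq_single b]
    · simp
    · intro b' _ hb'; simp [Pi.single_apply, hb']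
    · simp
  · intro a' _ ha'
    apply Finset.sum_eq_zero; intro b' _
    simp [Pi.single_apply, ha']
  · simp

lemma eval_Fstar {m r : ℕ} (z : (Fin m ⊕ Fin m) → ℂ) (c : Fin r) :
    eval z (Fpoly m r (bilinCoords m r (Tstar m r)) c)
      = ∑ a : Fin m, ∑ b : Fin m,
          if (a:ℕ)+(b:ℕ) = (c:ℕ) then z (Sum.inl a) * z (Sum.inr b) else 0 := by
  simp only [Fpoly, map_sum, map_mul, eval_C, eval_X, coords_Tstar]
  apply Finset.sum_congr rfl; intro a _
  apply Finset.sum_congr rfl; intro b _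
  split_ifs <;> simp

lemma zero_of_eval_Fstar {m r : ℕ} (hr : 2*m - 1 ≤ r)
    (z : (Fin m ⊕ Fin m) → ℂ)
    (hz : ∀ c : Fin r, eval z (Fpoly m r (bilinCoords m r (Tstar m r)) c) = 0)
    (a b : Fin m) : z (Sum.inl a) * z (Sum.inr b) = 0 := by
  set P : Polynomial ℂ := ∑ a : Fin m, Polynomial.C (z (Sum.inl a)) * Polynomial.X ^ (a:ℕ)
    with hP
  set Q : Polynomial ℂ := ∑ b : Fin m, Polynomial.C (z (Sum.inr b)) * Polynomial.X ^ (b:ℕ)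
    with hQ
  have hcoeff : ∀ k, (P*Q).coeff k = ∑ a : Fin m, ∑ b : Fin m,
      if (a:ℕ)+(b:ℕ) = k then z (Sum.inl a) * z (Sum.inr b) else 0 := by
    intro k
    rw [hP, hQ, Finset.sum_mul_sum, Polynomial.finset_sum_coeff]
    apply Finset.sum_congr rfl; intro a' _
    rw [Polynomial.finset_sum_coeff]
    apply Finset.sum_congr rfl; intro b' _
    rw [mul_mul_mul_comm, ← Polynomial.C_mul, ← pow_add, Polynomial.coeff_C_mul,
      Polynomial.coeff_X_pow]
    by_cases h : (a':ℕ)+(b':ℕ) = k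
    · rw [if_pos h, if_pos h.symm, mul_one]
    · rw [if_neg h, if_neg (Ne.symm h), mul_zero]
  have hPQ : P * Q = 0 := by
    apply Polynomial.ext; intro k
    rw [hcoeff, Polynomial.coeff_zero]
    by_cases hk : k < 2*m - 1
    · have hkr : k < r := lt_of_lt_of_le hk hr
      have := hz ⟨k, hkr⟩
      rw [eval_Fstar] at this
      simpa using this
    · apply Finset.sum_eq_zero; intro a' _
      apply Finset.sum_eq_zero; intro b' _
      rw [if_neg]
      have := a'.isLt; have := b'.isLt
      omega
  rcases mul_eq_zero.mp hPQ with h | h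
  · have : P.coeff (a:ℕ) = 0 := by rw [h, Polynomial.coeff_zero]
    rw [hP, Polynomial.finset_sum_coeff] at this
    have hPa : ∑ a' : Fin m, (Polynomial.C (z (Sum.inl a')) * Polynomial.X ^ (a':ℕ)).coeff (a:ℕ)
        = z (Sum.inl a) := by
      rw [Finset.sum_eq_single a]
      · simp
      · intro a' _ ha'
        rw [Polynomial.coeff_C_mul, Polynomial.coeff_X_pow,
          if_neg (by simpa [Fin.val_inj] using (Ne.symm ha')), mul_zero]
      · simp
    rw [hPa] at this; rw [this, zero_mul]
  · have : Q.coeff (b:ℕ) = 0 := by rw [h, Polynomial.coeff_zero]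
    rw [hQ, Polynomial.finset_sum_coeff] at this
    have hQb : ∑ b' : Fin m, (Polynomial.C (z (Sum.inr b')) * Polynomial.X ^ (b':ℕ)).coeff (b:ℕ)
        = z (Sum.inr b) := by
      rw [Finset.sum_eq_single b]
      · simp
      · intro b' _ hb'
        rw [Polynomial.coeff_C_mul, Polynomial.coeff_X_pow,
          if_neg (by simpa [Fin.val_inj] using (Ne.symm hb')), mul_zero]
      · simp
    rw [hQb] at this; rw [this, mul_zero]

lemma exists_pow_XX_mem (m r : ℕ) (hr : 2*m - 1 ≤ r) :
    ∃ s : ℕ, 1 ≤ s ∧ ∀ a b : Fin m,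
      (X (Sum.inl a) * X (Sum.inr b) : MvPolynomial (Fin m ⊕ Fin m) ℂ)^s
        ∈ Ideal.span (Set.range (Fpoly m r (bilinCoords m r (Tstar m r)))) := by
  set I := Ideal.span (Set.range (Fpoly m r (bilinCoords m r (Tstar m r)))) with hI
  have hrad : ∀ ab : Fin m × Fin m,
      ∃ n : ℕ, (X (Sum.inl ab.1) * X (Sum.inr ab.2) : MvPolynomial (Fin m ⊕ Fin m) ℂ)^n ∈ I := by
    intro ⟨a, b⟩
    have : (X (Sum.inl a) * X (Sum.inr b) : MvPolynomial (Fin m ⊕ Fin m) ℂ) ∈ I.radical := by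
      rw [hI, ← vanishingIdeal_zeroLocus_eq_radical (K := ℂ), mem_vanishingIdeal_iff]
      intro z hz
      rw [mem_zeroLocus_iff] at hz
      have := zero_of_eval_Fstar hr z
        (fun c => hz _ (Ideal.subset_span ⟨c, rfl⟩)) a b
      simpa using this
    exact this
  choose N hN using hrad
  refine ⟨(Finset.univ.sup fun ab => N ab) + 1, le_add_self.trans (le_refl _), ?_⟩
  intro a b
  have hle : N (a, b) ≤ Finset.univ.sup (fun ab => N ab) + 1 :=
    le_trans (Finset.le_sup (Finset.mem_univ _)) (Nat.le_succ _)
  rw [← Nat.add_sub_cancel' hle, pow_add]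
  exact Ideal.mul_mem_right _ _ (hN (a, b))



/-- weight function: x-variables have weight (1,0), y-variables (0,1) -/
def wtS (m : ℕ) : (Fin m ⊕ Fin m) → ℕ × ℕ := Sum.elim (fun _ => (1,0)) (fun _ => (0,1))


lemma weight_wtS {m : ℕ} (d : (Fin m ⊕ Fin m) →₀ ℕ) :
    Finsupp.weight (wtS m) d = (∑ a : Fin m, d (Sum.inl a), ∑ b : Fin m, d (Sum.inr b)) := by
  rw [Finsupp.weight_apply, Finsupp.sum_fintype, Fintype.sum_sum_type]
  case h => intro i; exact zero_smul ℕ _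
  ext
  · simp [wtS, Prod.fst_sum]
  · simp [wtS, Prod.snd_sum]

lemma weight_wtS_single_add_single {m : ℕ} (a b : Fin m) :
    Finsupp.weight (wtS m)
      (Finsupp.single (Sum.inl a) 1 + Finsupp.single (Sum.inr b) 1) = ((1 : ℕ), (1 : ℕ)) := by
  rw [weight_wtS]
  congr 1
  · rw [Finset.sum_eq_single a] <;> simp +contextual [Finsupp.single_apply, eq_comm]
  · rw [Finset.sum_eq_single b] <;> simp +contextual [Finsupp.single_apply, eq_comm]

lemma CXX_eq_monomial {m : ℕ} (z : ℂ) (a b : Fin m) :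
    (C z * X (Sum.inl a) * X (Sum.inr b) : MvPolynomial (Fin m ⊕ Fin m) ℂ)
      = monomial (Finsupp.single (Sum.inl a) 1 + Finsupp.single (Sum.inr b) 1) z := by
  rw [X, X, C_mul_monomial, monomial_mul, mul_one, mul_one]

lemma isWH_Fpoly (m r : ℕ) (t : Fin r × Fin m × Fin m → ℂ) (c : Fin r) :
    IsWeightedHomogeneous (wtS m) (Fpoly m r t c) ((1 : ℕ), (1 : ℕ)) := by
  have : Fpoly m r t c ∈ weightedHomogeneousSubmodule ℂ (wtS m) ((1:ℕ),(1:ℕ)) := by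
    apply Submodule.sum_mem; intro a _
    apply Submodule.sum_mem; intro b _
    rw [mem_weightedHomogeneousSubmodule, CXX_eq_monomial]
    exact isWeightedHomogeneous_monomial _ _ _ (weight_wtS_single_add_single a b)
  exact this


lemma wHC_succ_monomial_mul {m : ℕ} {f : MvPolynomial (Fin m ⊕ Fin m) ℂ}
    (hf : IsWeightedHomogeneous (wtS m) f ((1:ℕ),(1:ℕ))) (e : (Fin m ⊕ Fin m) →₀ ℕ)
    (z : ℂ) (p q : ℕ) :
    weightedHomogeneousComponent (wtS m) (p+1, q+1) (monomial e z * f)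
      = if Finsupp.weight (wtS m) e = (p, q) then monomial e z * f else 0 := by
  have hmono : IsWeightedHomogeneous (wtS m) (monomial e z) (Finsupp.weight (wtS m) e) :=
    isWeightedHomogeneous_monomial _ _ _ rfl
  have hq : IsWeightedHomogeneous (wtS m) (monomial e z * f)
      (Finsupp.weight (wtS m) e + ((1:ℕ),(1:ℕ))) := hmono.mul hf
  by_cases hw : Finsupp.weight (wtS m) e = (p,q)
  · rw [if_pos hw]; rw [hw] at hq
    have heq : ((p,q) : ℕ×ℕ) + (1,1) = (p+1, q+1) := rfl
    rw [heq] at hq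
    exact hq.weightedHomogeneousComponent_same
  · rw [if_neg hw]
    apply hq.weightedHomogeneousComponent_ne
    intro hcontra
    apply hw
    have h1 := congrArg Prod.fst hcontra
    have h2 := congrArg Prod.snd hcontra
    simp only [Prod.fst_add, Prod.snd_add, Prod.fst, Prod.snd] at h1 h2
    ext
    · exact by omega
    · exact by omega

lemma monomial_mem_span (m r s : ℕ) (hm : 1 ≤ m) (hs : 1 ≤ s)
    (t : Fin r × Fin m × Fin m → ℂ)
    (hrep : ∀ a b : Fin m,
      (X (Sum.inl a) * X (Sum.inr b) : MvPolynomial (Fin m ⊕ Fin m) ℂ)^s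
        ∈ Ideal.span (Set.range (Fpoly m r t)))
    (d : (Fin m ⊕ Fin m) →₀ ℕ)
    (hd : Finsupp.weight (wtS m) d = (m*s, m*s)) :
    (monomial d 1 : MvPolynomial (Fin m ⊕ Fin m) ℂ) ∈ Submodule.span ℂ
      {v | ∃ (c : Fin r) (e : (Fin m ⊕ Fin m) →₀ ℕ),
        Finsupp.weight (wtS m) e = (m*s - 1, m*s - 1) ∧ v = monomial e 1 * Fpoly m r t c} := by
  set K := m * s with hKdef
  have hK1 : 1 ≤ K := Nat.one_le_iff_ne_zero.mpr (by positivity)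
  have hd1 : ∑ a : Fin m, d (Sum.inl a) = K := by
    have := congrArg Prod.fst ((weight_wtS d).symm.trans hd); simpa using this
  have hd2 : ∑ b : Fin m, d (Sum.inr b) = K := by
    have := congrArg Prod.snd ((weight_wtS d).symm.trans hd); simpa using this
  -- pigeonhole
  have pigeon : ∀ (g : Fin m → ℕ), (∑ a, g a = K) → ∃ a₀, s ≤ g a₀ := by
    intro g hg
    by_contra hcon
    push_neg at hcon
    have hle : ∑ a, g a ≤ m * (s-1) := by
      calc ∑ a, g a ≤ ∑ _a : Fin m, (s-1) :=
            Finset.sum_le_sum (fun a _ => Nat.le_sub_one_of_lt (hcon a))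
        _ = m * (s-1) := by simp [Finset.sum_const, mul_comm]
    have : m * (s-1) < m * s := mul_lt_mul_of_pos_left (Nat.sub_lt hs one_pos) (by omega : (0:ℕ) < m)
    omega
  obtain ⟨a₀, ha₀⟩ := pigeon (fun a => d (Sum.inl a)) hd1
  obtain ⟨b₀, hb₀⟩ := pigeon (fun b => d (Sum.inr b)) hd2
  set u : (Fin m ⊕ Fin m) →₀ ℕ :=
    Finsupp.single (Sum.inl a₀) s + Finsupp.single (Sum.inr b₀) s with hu
  have hud : u ≤ d := by
    rw [Finsupp.le_def]
    intro i
    rcases i with a | b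
    · by_cases ha : a = a₀
      · subst ha; simpa [hu, Finsupp.single_apply] using ha₀
      · simp [hu, Finsupp.single_apply, Ne.symm ha, ha]
    · by_cases hb : b = b₀
      · subst hb; simpa [hu, Finsupp.single_apply] using hb₀
      · simp [hu, Finsupp.single_apply, Ne.symm hb, hb]
  have hdu : d - u + u = d := tsub_add_cancel_of_le hud
  have hXX : (X (Sum.inl a₀) * X (Sum.inr b₀) : MvPolynomial (Fin m ⊕ Fin m) ℂ)^s
      = monomial u 1 := by
    rw [X, X, monomial_mul, mul_one, monomial_pow, one_pow, hu, smul_add,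
      Finsupp.smul_single, Finsupp.smul_single, smul_eq_mul, mul_one]
  obtain ⟨g, hg⟩ := (Ideal.mem_span_range_iff_exists_fun).mp (hrep a₀ b₀)
  have hsplit : (monomial d 1 : MvPolynomial (Fin m ⊕ Fin m) ℂ)
      = ∑ c : Fin r, (monomial (d - u) 1 * g c) * Fpoly m r t c := by
    have : (monomial d 1 : MvPolynomial (Fin m ⊕ Fin m) ℂ)
        = monomial (d - u) 1 * monomial u 1 := by
      rw [monomial_mul, mul_one, hdu]
    rw [this, ← hXX, ← hg, Finset.mul_sum]
    apply Finset.sum_congr rfl; intro c _; ring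
  have hwhd : IsWeightedHomogeneous (wtS m) (monomial d (1:ℂ)) (K, K) :=
    isWeightedHomogeneous_monomial _ _ _ hd
  have hmain : (monomial d 1 : MvPolynomial (Fin m ⊕ Fin m) ℂ)
      = ∑ c : Fin r, weightedHomogeneousComponent (wtS m) (K, K)
          ((monomial (d - u) 1 * g c) * Fpoly m r t c) := by
    conv_lhs => rw [← hwhd.weightedHomogeneousComponent_same, hsplit]
    rw [map_sum]
  rw [hmain]
  apply Submodule.sum_mem
  intro c _
  have hGsum := (monomial (d - u) (1:ℂ) * g c).as_sum
  rw [hGsum, Finset.sum_mul, map_sum]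
  apply Submodule.sum_mem
  intro e _
  have hKK : K - 1 + 1 = K := Nat.sub_add_cancel hK1
  have := wHC_succ_monomial_mul (isWH_Fpoly m r t c) e
    (coeff e (monomial (d - u) (1:ℂ) * g c)) (K-1) (K-1)
  rw [hKK] at this
  rw [this]
  split_ifs with hw
  · have : (monomial e (coeff e (monomial (d - u) (1:ℂ) * g c))) * Fpoly m r t c
        = (coeff e (monomial (d - u) (1:ℂ) * g c)) • ((monomial e 1) * Fpoly m r t c) := by
      rw [← smul_mul_assoc, smul_monomial, smul_eq_mul, mul_one]
    rw [this]
    exact Submodule.smul_mem _ _ (Submodule.subset_span ⟨c, e, hw, rfl⟩)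
  · exact Submodule.zero_mem _



lemma weight_wtS_single_single {m : ℕ} (a b : Fin m) (s₁ s₂ : ℕ) :
    Finsupp.weight (wtS m)
      (Finsupp.single (Sum.inl a) s₁ + Finsupp.single (Sum.inr b) s₂) = (s₁, s₂) := by
  rw [weight_wtS]
  congr 1
  · rw [Finset.sum_eq_single a] <;> simp +contextual [Finsupp.single_apply, eq_comm]
  · rw [Finset.sum_eq_single b] <;> simp +contextual [Finsupp.single_apply, eq_comm]

/-- Row index: monomials of bidegree `(K, K)`. -/
abbrev RowIdx (m K : ℕ) : Type :=
  {d : (Fin m ⊕ Fin m) →₀ ℕ // Finsupp.weight (wtS m) d = (K, K)}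

lemma RowIdx_coord_le {m K : ℕ} (ν : RowIdx m K) (i : Fin m ⊕ Fin m) : ν.1 i ≤ K := by
  obtain ⟨d, hd⟩ := ν
  have h1 : ∑ a : Fin m, d (Sum.inl a) = K := by
    have := congrArg Prod.fst ((weight_wtS d).symm.trans hd); simpa using this
  have h2 : ∑ b : Fin m, d (Sum.inr b) = K := by
    have := congrArg Prod.snd ((weight_wtS d).symm.trans hd); simpa using this
  rcases i with a | b
  · calc d (Sum.inl a) ≤ ∑ a : Fin m, d (Sum.inl a) :=
        Finset.single_le_sum (f := fun a : Fin m => d (Sum.inl a))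
          (fun _ _ => Nat.zero_le _) (Finset.mem_univ a)
    _ = K := h1
  · calc d (Sum.inr b) ≤ ∑ b : Fin m, d (Sum.inr b) :=
        Finset.single_le_sum (f := fun b : Fin m => d (Sum.inr b))
          (fun _ _ => Nat.zero_le _) (Finset.mem_univ b)
    _ = K := h2

instance RowIdx.finite (m K : ℕ) : Finite (RowIdx m K) := by
  apply Finite.of_injective (fun ν : RowIdx m K =>
    (fun i => (⟨ν.1 i, Nat.lt_succ_of_le (RowIdx_coord_le ν i)⟩ : Fin (K+1)) :
      (Fin m ⊕ Fin m) → Fin (K+1)))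
  intro ν ν' h
  apply Subtype.ext
  apply Finsupp.ext
  intro i
  exact congrArg Fin.val (congrFun h i)

noncomputable instance RowIdx.fintype (m K : ℕ) : Fintype (RowIdx m K) := Fintype.ofFinite _

noncomputable instance RowIdx.deceq (m K : ℕ) : DecidableEq (RowIdx m K) := Classical.decEq _

/-- Column index. -/
def ColIdx (m r K : ℕ) : Type := Fin r × RowIdx m (K-1)

noncomputable instance ColIdx.fintype (m r K : ℕ) : Fintype (ColIdx m r K) :=
  instFintypeProd _ _

/-- The universal matrix with polynomial entries. -/
def Amat (m r K : ℕ) (ν : RowIdx m K) (γ : ColIdx m r K) :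
    MvPolynomial (Fin r × Fin m × Fin m) ℂ :=
  ∑ a : Fin m, ∑ b : Fin m,
    if γ.2.1 + Finsupp.single (Sum.inl a) 1 + Finsupp.single (Sum.inr b) 1 = ν.1
    then X (γ.1, a, b) else 0

lemma eval_Amat (m r K : ℕ) (t : Fin r × Fin m × Fin m → ℂ) (ν : RowIdx m K)
    (γ : ColIdx m r K) :
    eval t (Amat m r K ν γ) = coeff ν.1 (monomial γ.2.1 1 * Fpoly m r t γ.1) := by
  rw [Fpoly, Finset.mul_sum]
  simp_rw [Finset.mul_sum]
  rw [MvPolynomial.coeff_sum]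
  simp_rw [MvPolynomial.coeff_sum]
  rw [Amat, map_sum]
  apply Finset.sum_congr rfl; intro a _
  rw [map_sum]
  apply Finset.sum_congr rfl; intro b _
  rw [CXX_eq_monomial, monomial_mul, one_mul, coeff_monomial, apply_ite (eval t), eval_X,
    map_zero, ← add_assoc]

lemma sum_rows_eq_eval (m K : ℕ) (z : (Fin m ⊕ Fin m) → ℂ)
    (p : MvPolynomial (Fin m ⊕ Fin m) ℂ)
    (hp : IsWeightedHomogeneous (wtS m) p ((K:ℕ), (K:ℕ))) :
    ∑ ν : RowIdx m K, (∏ i, z i ^ (ν.1 i)) * coeff ν.1 p = eval z p := by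
  classical
  rw [show (∑ ν : RowIdx m K, (∏ i, z i ^ (ν.1 i)) * coeff ν.1 p)
      = ∑ d ∈ Finset.univ.image (Subtype.val : RowIdx m K → _),
          coeff d p * ∏ i, z i ^ d i from by
    rw [Finset.sum_image (fun a _ b _ h => Subtype.ext h)]
    exact Finset.sum_congr rfl (fun ν _ => mul_comm _ _)]
  rw [eval_eq']
  symm
  apply Finset.sum_subset
  · intro d hd
    rw [mem_support_iff] at hd
    exact Finset.mem_image.mpr ⟨⟨d, hp hd⟩, Finset.mem_univ _, rfl⟩
  · intro d _ hd
    rw [mem_support_iff, not_not] at hd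
    rw [hd, zero_mul]

lemma whomog_col (m r K : ℕ) (hK : 1 ≤ K) (t : Fin r × Fin m × Fin m → ℂ)
    (c : Fin r) (e : (Fin m ⊕ Fin m) →₀ ℕ)
    (he : Finsupp.weight (wtS m) e = ((K-1 : ℕ), (K-1 : ℕ))) :
    IsWeightedHomogeneous (wtS m) (monomial e (1:ℂ) * Fpoly m r t c) ((K:ℕ), (K:ℕ)) := by
  have h := (isWeightedHomogeneous_monomial (wtS m) e (1:ℂ) he).mul (isWH_Fpoly m r t c)
  have heq : ((K-1 : ℕ), (K-1 : ℕ)) + ((1:ℕ), (1:ℕ)) = ((K:ℕ), (K:ℕ)) := by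
    rw [Prod.mk_add_mk]
    have : K - 1 + 1 = K := Nat.sub_add_cancel hK
    rw [this]
  rwa [heq] at h

lemma eval_det_Amat_eq_zero (m r K : ℕ) (hK : 1 ≤ K)
    (T : (Fin m → ℂ) →ₗ[ℂ] (Fin m → ℂ) →ₗ[ℂ] (Fin r → ℂ))
    (x y : Fin m → ℂ) (hx : x ≠ 0) (hy : y ≠ 0) (hT : T x y = 0)
    (f : RowIdx m K → ColIdx m r K) :
    eval (bilinCoords m r T)
      (Matrix.det (Matrix.of fun ν ν' => Amat m r K ν (f ν'))) = 0 := by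
  classical
  rw [RingHom.map_det]
  set z := Sum.elim x y with hz
  set lam : RowIdx m K → ℂ := fun ν => ∏ i, z i ^ (ν.1 i) with hlam
  apply Matrix.exists_vecMul_eq_zero_iff.mp
  refine ⟨lam, ?_, ?_⟩
  · -- lam ≠ 0
    obtain ⟨a₀, ha₀⟩ := Function.ne_iff.mp hx
    obtain ⟨b₀, hb₀⟩ := Function.ne_iff.mp hy
    set ν₀ : RowIdx m K := ⟨_, weight_wtS_single_single a₀ b₀ K K⟩ with hν₀def
    rw [Function.ne_iff]
    refine ⟨ν₀, ?_⟩
    have hinl : ∀ a : Fin m, z (Sum.inl a) ^ (ν₀.1 (Sum.inl a))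
        = if a₀ = a then x a ^ K else 1 := by
      intro a
      rw [hν₀def]
      show z (Sum.inl a) ^
        ((Finsupp.single (Sum.inl a₀) K + Finsupp.single (Sum.inr b₀) K :
          (Fin m ⊕ Fin m) →₀ ℕ) (Sum.inl a)) = _
      rw [Finsupp.add_apply, Finsupp.single_apply, Finsupp.single_apply]
      have hza : z (Sum.inl a) = x a := rfl
      rw [hza, if_neg (by simp : ¬(Sum.inr b₀ = Sum.inl a)), add_zero]
      by_cases h : a₀ = a
      · subst h; rw [if_pos rfl, if_pos rfl]
      · rw [if_neg (by simpa using h), if_neg h, pow_zero]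
    have hinr : ∀ b : Fin m, z (Sum.inr b) ^ (ν₀.1 (Sum.inr b))
        = if b₀ = b then y b ^ K else 1 := by
      intro b
      rw [hν₀def]
      show z (Sum.inr b) ^
        ((Finsupp.single (Sum.inl a₀) K + Finsupp.single (Sum.inr b₀) K :
          (Fin m ⊕ Fin m) →₀ ℕ) (Sum.inr b)) = _
      rw [Finsupp.add_apply, Finsupp.single_apply, Finsupp.single_apply]
      have hzb : z (Sum.inr b) = y b := rfl
      rw [hzb, if_neg (by simp : ¬(Sum.inl a₀ = Sum.inr b)), zero_add]
      by_cases h : b₀ = b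
      · subst h; rw [if_pos rfl, if_pos rfl]
      · rw [if_neg (by simpa using h), if_neg h, pow_zero]
    have : lam ν₀ = x a₀ ^ K * y b₀ ^ K := by
      rw [hlam]
      show (∏ i : Fin m ⊕ Fin m, z i ^ (ν₀.1 i)) = _
      rw [Fintype.prod_sum_type]
      congr 1
      · rw [Finset.prod_congr rfl (fun a _ => hinl a), Finset.prod_ite_eq]
        simp
      · rw [Finset.prod_congr rfl (fun b _ => hinr b), Finset.prod_ite_eq]
        simp
    have h0 : (0 : RowIdx m K → ℂ) ν₀ = 0 := rfl
    rw [this, h0]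
    exact mul_ne_zero (pow_ne_zero _ ha₀) (pow_ne_zero _ hb₀)
  · -- vecMul lam M = 0
    funext ν'
    simp only [Matrix.vecMul, dotProduct, RingHom.mapMatrix_apply, Matrix.map_apply,
      Matrix.of_apply, Pi.zero_apply]
    simp_rw [eval_Amat]
    rw [sum_rows_eq_eval m K z _ (whomog_col m r K hK _ (f ν').1 (f ν').2.1 (f ν').2.2)]
    rw [map_mul, eval_Fpoly T x y (f ν').1, hT]
    simp

lemma exists_f_det_ne_zero (m r K : ℕ) (t : Fin r × Fin m × Fin m → ℂ)
    (hspan : ∀ ν : RowIdx m K, (monomial ν.1 1 : MvPolynomial (Fin m ⊕ Fin m) ℂ) ∈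
      Submodule.span ℂ
        {v | ∃ (c : Fin r) (e : (Fin m ⊕ Fin m) →₀ ℕ),
          Finsupp.weight (wtS m) e = ((K-1 : ℕ), (K-1 : ℕ)) ∧ v = monomial e 1 * Fpoly m r t c}) :
    ∃ f : RowIdx m K → ColIdx m r K,
      eval t (Matrix.det (Matrix.of fun ν ν' => Amat m r K ν (f ν'))) ≠ 0 := by
  classical
  set S := {v | ∃ (c : Fin r) (e : (Fin m ⊕ Fin m) →₀ ℕ),
      Finsupp.weight (wtS m) e = ((K-1 : ℕ), (K-1 : ℕ)) ∧ v = monomial e 1 * Fpoly m r t c}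
    with hS
  set Θ : MvPolynomial (Fin m ⊕ Fin m) ℂ →ₗ[ℂ] (RowIdx m K → ℂ) :=
    { toFun := fun p ν => coeff ν.1 p,
      map_add' := fun p q => by funext ν; simp [coeff_add],
      map_smul' := fun s p => by funext ν; simp [coeff_smul] } with hΘ
  set col : ColIdx m r K → (RowIdx m K → ℂ) :=
    fun γ ν => eval t (Amat m r K ν γ) with hcoldef
  have hcol : ∀ γ : ColIdx m r K, col γ = Θ (monomial γ.2.1 1 * Fpoly m r t γ.1) := by
    intro γ; funext ν; exact eval_Amat m r K t ν γ
  have hsingle : ∀ ν : RowIdx m K, (Pi.single ν (1:ℂ) : RowIdx m K → ℂ)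
      = Θ (monomial ν.1 1) := by
    intro ν; funext ν'
    show (Pi.single ν (1:ℂ) : RowIdx m K → ℂ) ν' = coeff ν'.1 (monomial ν.1 1)
    rw [Pi.single_apply, coeff_monomial]
    by_cases h : ν' = ν
    · rw [if_pos h, if_pos (by rw [h])]
    · rw [if_neg h, if_neg (fun hc => h (Subtype.ext hc.symm))]
  have hspan2 : ⊤ ≤ Submodule.span ℂ (Set.range col) := by
    intro v _
    rw [← Finset.univ_sum_single v]
    apply Submodule.sum_mem
    intro ν _
    have hsm : (Pi.single ν (v ν) : RowIdx m K → ℂ)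
        = v ν • (Pi.single ν (1:ℂ) : RowIdx m K → ℂ) := by
      rw [← Pi.single_smul, smul_eq_mul, mul_one]
    rw [hsm]
    apply Submodule.smul_mem
    rw [hsingle ν]
    have h1 : Θ (monomial ν.1 1) ∈ Submodule.map Θ (Submodule.span ℂ S) :=
      Submodule.mem_map_of_mem (hspan ν)
    rw [Submodule.map_span] at h1
    refine Submodule.span_mono ?_ h1
    rintro _ ⟨q, ⟨c, e, he, rfl⟩, rfl⟩
    exact ⟨(c, ⟨e, he⟩), hcol (c, ⟨e, he⟩)⟩
  obtain ⟨b, hbsub, hbspan, hbli⟩ := exists_linearIndependent ℂ (Set.range col)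
  have hbtop : Submodule.span ℂ b = ⊤ := by
    rw [hbspan]; exact le_antisymm le_top hspan2
  haveI : Fintype b := ((Set.finite_range col).subset hbsub).fintype
  let B : Module.Basis b ℂ (RowIdx m K → ℂ) := Module.Basis.mk hbli (by
    rw [Subtype.range_coe, hbtop])
  have hcard : Fintype.card (RowIdx m K) = Fintype.card b := by
    rw [← Module.finrank_eq_card_basis B, Module.finrank_pi]
  set E : RowIdx m K ≃ b := Fintype.equivOfCardEq hcard with hE
  have hex : ∀ v : b, ∃ γ : ColIdx m r K, col γ = (v : RowIdx m K → ℂ) := fun v => hbsub v.2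
  choose gfun hg using hex
  refine ⟨fun ν => gfun (E ν), ?_⟩
  rw [RingHom.map_det]
  rw [Ne, ← Matrix.exists_mulVec_eq_zero_iff]
  rintro ⟨v, hv, hMv⟩
  apply hv
  have hsum : ∑ ν', v ν' • ((E ν' : RowIdx m K → ℂ)) = 0 := by
    funext ν
    have := congrFun hMv ν
    simp only [Matrix.mulVec, dotProduct, RingHom.mapMatrix_apply, Matrix.map_apply,
      Matrix.of_apply, Pi.zero_apply] at this
    simp only [Finset.sum_apply, Pi.smul_apply, smul_eq_mul, Pi.zero_apply]
    rw [← this]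
    apply Finset.sum_congr rfl
    intro ν' _
    rw [← hg (E ν'), hcoldef]
    ring
  have hli2 : LinearIndependent ℂ (fun ν' : RowIdx m K => ((E ν' : RowIdx m K → ℂ))) :=
    hbli.comp E E.injective
  exact funext fun ν' => Fintype.linearIndependent_iff.mp hli2 v hsum ν'
end StmtAux


/-- For `n ≥ 2`, `1 ≤ r ≤ n-1` with `2(n-r-1) < r`, the set `S₁` of symmetric
`ℂ`-bilinear maps `T : ℂ^{n-r} × ℂ^{n-r} → ℂ^r` admitting nonzero `x, y` with `T x y = 0`
is contained in a proper complex algebraic subset of `Sym_ℂ(n-r, r)`: there are finitely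
many polynomials in the coordinates of `T`, not all vanishing identically on the symmetric
maps, that vanish on every element of `S₁`. -/
theorem stmt6 (n r : ℕ) (hn : 2 ≤ n) (hr1 : 1 ≤ r) (hrn : r ≤ n - 1)
    (hdim : 2 * (n - r - 1) < r) :
    ∃ (k : ℕ) (p : Fin k → MvPolynomial (Fin r × Fin (n - r) × Fin (n - r)) ℂ),
      (∃ T₀ : (Fin (n - r) → ℂ) →ₗ[ℂ] (Fin (n - r) → ℂ) →ₗ[ℂ] (Fin r → ℂ),
        (∀ x y, T₀ x y = T₀ y x) ∧
        ∃ j, eval (bilinCoords (n - r) r T₀) (p j) ≠ 0) ∧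
      ∀ T : (Fin (n - r) → ℂ) →ₗ[ℂ] (Fin (n - r) → ℂ) →ₗ[ℂ] (Fin r → ℂ),
        (∀ x y, T x y = T y x) →
        (∃ x : Fin (n - r) → ℂ, x ≠ 0 ∧ ∃ y : Fin (n - r) → ℂ, y ≠ 0 ∧ T x y = 0) →
        ∀ j, eval (bilinCoords (n - r) r T) (p j) = 0 := by
  classical
  have hm1 : 1 ≤ n - r := by omega
  have hr2m : 2*(n-r) - 1 ≤ r := by omega
  obtain ⟨s, hs1, hrep⟩ := exists_pow_XX_mem (n-r) r hr2m
  set K := (n - r) * s with hK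
  have hK1 : 1 ≤ K := Nat.one_le_iff_ne_zero.mpr (Nat.mul_ne_zero (by omega) (by omega))
  refine ⟨Fintype.card (RowIdx (n-r) K → ColIdx (n-r) r K),
    fun j => Matrix.det (Matrix.of fun ν ν' =>
      Amat (n-r) r K ν (((Fintype.equivFin (RowIdx (n-r) K → ColIdx (n-r) r K)).symm j) ν')),
    ?_, ?_⟩
  · refine ⟨Tstar (n-r) r, Tstar_symm (n-r) r, ?_⟩
    have hspan : ∀ ν : RowIdx (n-r) K,
        (monomial ν.1 1 : MvPolynomial (Fin (n-r) ⊕ Fin (n-r)) ℂ) ∈ Submodule.span ℂ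
          {v | ∃ (c : Fin r) (e : (Fin (n-r) ⊕ Fin (n-r)) →₀ ℕ),
            Finsupp.weight (wtS (n-r)) e = ((K-1:ℕ),(K-1:ℕ)) ∧
            v = monomial e 1 * Fpoly (n-r) r (bilinCoords (n-r) r (Tstar (n-r) r)) c} := by
      intro ν
      have h := monomial_mem_span (n-r) r s hm1 hs1 _ hrep ν.1 (by rw [← hK]; exact ν.2)
      rw [← hK] at h
      exact h
    obtain ⟨f, hf⟩ := exists_f_det_ne_zero (n-r) r K _ hspan
    refine ⟨(Fintype.equivFin _) f, ?_⟩
    simpa [Equiv.symm_apply_apply] using hf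
  · rintro T _ ⟨x, hx, y, hy, hTxy⟩ j
    exact eval_det_Amat_eq_zero (n-r) r K hK1 T x y hx hy hTxy _
end
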